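/- Let (M, C, T_l, T_r, Π, t, i) be an admissible septuple, let w : T_r X → T_l X and w' : T_r X' → T_l X' be transposition morphisms, and let f : X → X' be a morphism of M satisfying T_l(f) ∘ w = w' ∘ T_r(f). Then for every n the morphism Π(T_l^{n+1} f) : Π(T_l^{n+1} X) → Π(T_l^{n+1} X') commutes with the para-cocyclic operators, i.e. Π(T_l^{n+1} f) ∘ w_n = w'_n ∘ Π(T_l^{n+1} f), where w_n := Π(T_l^n w) ∘ (t_n)_X ∘ i_{T_l^n X} and w'_n := Π(T_l^n w') ∘ (t_n)_{X'} ∘ i_{T_l^n X'}. -/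

import Mathlib

/-!
Write `D_n := T_lⁿ w ∘ (t_n)_X : T_r T_lⁿ X → T_l^{n+1} X`, so that `w_n = Π(D_n) ∘ i_{T_lⁿ X}`.
By naturality of `i` it suffices that `T_l^{n+1} f ∘ D_n = D'_n ∘ T_r T_lⁿ f`, and this square is
the naturality square of `t_n` pasted with `T_lⁿ` applied to the square `T_l f ∘ w = w' ∘ T_r f`.
-/

open CategoryTheory

universe v u v' u'

namespace Stmt1

variable {M : Type u} [Category.{v} M]

/-- `fpow T n X` is the `n`-fold application `Tⁿ X`. -/
def fpow (T : M ⥤ M) : ℕ → M → M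
  | 0, X => X
  | n + 1, X => T.obj (fpow T n X)

/-- `coface T u X n k` represents the coface `d_k = Tᵏ (u_{T^{n-k} X}) : Tⁿ X ⟶ Tⁿ⁺¹ X`
(meaningful for `k ≤ n`). -/
def coface (T : M ⥤ M) (u : 𝟭 M ⟶ T) (X : M) : (n k : ℕ) → (fpow T n X ⟶ fpow T (n + 1) X)
  | n, 0 => u.app (fpow T n X)
  | n + 1, k + 1 => T.map (coface T u X n k)
  | 0, _ + 1 => u.app X

/-- `codeg T m X n k` represents the codegeneracy `s_k = Tᵏ (m_{T^{n-k} X}) : Tⁿ⁺² X ⟶ Tⁿ⁺¹ X`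
(meaningful for `k ≤ n`). -/
def codeg (T : M ⥤ M) (m : T ⋙ T ⟶ T) (X : M) : (n k : ℕ) → (fpow T (n + 2) X ⟶ fpow T (n + 1) X)
  | n, 0 => m.app (fpow T n X)
  | n + 1, k + 1 => T.map (codeg T m X n k)
  | 0, _ + 1 => m.app X

/-- The lifted distributive law
`t_n = T_l^{n-1} t ∘ ⋯ ∘ t T_l^{n-1} : T_r T_l^n X ⟶ T_l^n T_r X`. -/
def distIter (Tl Tr : M ⥤ M) (t : Tl ⋙ Tr ⟶ Tr ⋙ Tl) (X : M) :
    (n : ℕ) → (Tr.obj (fpow Tl n X) ⟶ fpow Tl n (Tr.obj X))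
  | 0 => 𝟙 (Tr.obj X)
  | n + 1 => t.app (fpow Tl n X) ≫ Tl.map (distIter Tl Tr t X n)

/-- `T_l^n w : T_l^n Y ⟶ T_l^{n+1} X` for `w : Y ⟶ T_l X`. -/
def transIter (T : M ⥤ M) {X Y : M} (w : Y ⟶ T.obj X) : (n : ℕ) → (fpow T n Y ⟶ fpow T (n + 1) X)
  | 0 => w
  | n + 1 => T.map (transIter T w n)

variable {C : Type u'} [Category.{v'} C]

/-- The para-cocyclic operator `w_n := Π(T_l^n w) ∘ (t_n)_X ∘ i_{T_l^n X}`. -/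
def paraOp (Tl Tr : M ⥤ M) (t : Tl ⋙ Tr ⟶ Tr ⋙ Tl) (P : M ⥤ C) (i : Tl ⋙ P ⟶ Tr ⋙ P)
    {X : M} (w : Tr.obj X ⟶ Tl.obj X) (n : ℕ) :
    P.obj (fpow Tl (n + 1) X) ⟶ P.obj (fpow Tl (n + 1) X) :=
  i.app (fpow Tl n X) ≫ P.map (distIter Tl Tr t X n ≫ transIter Tl w n)


/-- `T^n f : Tⁿ X ⟶ Tⁿ Y`. -/
def fpowMap (T : M ⥤ M) {X Y : M} (f : X ⟶ Y) : (n : ℕ) → (fpow T n X ⟶ fpow T n Y)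
  | 0 => f
  | n + 1 => T.map (fpowMap T f n)

lemma distIter_naturality (Tl Tr : M ⥤ M) (t : Tl ⋙ Tr ⟶ Tr ⋙ Tl) {X X' : M} (f : X ⟶ X')
    (n : ℕ) :
    Tr.map (fpowMap Tl f n) ≫ distIter Tl Tr t X' n =
      distIter Tl Tr t X n ≫ fpowMap Tl (Tr.map f) n := by
  induction n with
  | zero => exact (Category.comp_id _).trans (Category.id_comp _).symm
  | succ n ih =>
    have hTl := congrArg Tl.map ih
    simp only [Functor.map_comp] at hTl
    exact (t.naturality_assoc _ _).trans ((congrArg (t.app _ ≫ ·) hTl).trans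
      (Category.assoc _ _ _).symm)

lemma transIter_naturality (T : M ⥤ M) {X X' Y Y' : M} {w : Y ⟶ T.obj X} {w' : Y' ⟶ T.obj X'}
    {g : Y ⟶ Y'} {f : X ⟶ X'} (h : w ≫ T.map f = g ≫ w') (n : ℕ) :
    fpowMap T g n ≫ transIter T w' n = transIter T w n ≫ fpowMap T f (n + 1) := by
  induction n with
  | zero => exact h.symm
  | succ n ih =>
    exact (T.map_comp _ _).symm.trans ((congrArg T.map ih).trans (T.map_comp _ _))

lemma app_comp_map_commute (Tl Tr : M ⥤ M) (P : M ⥤ C) (i : Tl ⋙ P ⟶ Tr ⋙ P) {Y Y' : M}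
    {D : Tr.obj Y ⟶ Tl.obj Y} {D' : Tr.obj Y' ⟶ Tl.obj Y'} {g : Y ⟶ Y'}
    (h : D ≫ Tl.map g = Tr.map g ≫ D') :
    (i.app Y ≫ P.map D) ≫ P.map (Tl.map g) = P.map (Tl.map g) ≫ i.app Y' ≫ P.map D' := by
  rw [Category.assoc, ← P.map_comp, h, P.map_comp]
  exact (i.naturality_assoc g _).symm

theorem paraOp_naturality_general
    (Tl Tr : M ⥤ M)
    (P : M ⥤ C) (t : Tl ⋙ Tr ⟶ Tr ⋙ Tl) (i : Tl ⋙ P ⟶ Tr ⋙ P)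
    -- transposition morphisms `w`, `w'`
    (X X' : M) (w : Tr.obj X ⟶ Tl.obj X) (w' : Tr.obj X' ⟶ Tl.obj X')
    -- a morphism of transposition morphisms
    (f : X ⟶ X') (hf : w ≫ Tl.map f = Tr.map f ≫ w') :
    ∀ n : ℕ, paraOp Tl Tr t P i w n ≫ P.map (fpowMap Tl f (n + 1)) =
      P.map (fpowMap Tl f (n + 1)) ≫ paraOp Tl Tr t P i w' n := by
  intro n
  have hsquare : distIter Tl Tr t X n ≫ transIter Tl w n ≫ fpowMap Tl f (n + 1) =
      Tr.map (fpowMap Tl f n) ≫ distIter Tl Tr t X' n ≫ transIter Tl w' n := by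
    rw [← transIter_naturality Tl hf, reassoc_of% distIter_naturality]
  exact app_comp_map_commute Tl Tr P i ((Category.assoc _ _ _).trans hsquare)

theorem paraOp_naturality
    (Tl Tr : M ⥤ M) (ml : Tl ⋙ Tl ⟶ Tl) (ul : 𝟭 M ⟶ Tl)
    (mr : Tr ⋙ Tr ⟶ Tr) (ur : 𝟭 M ⟶ Tr)
    (P : M ⥤ C) (t : Tl ⋙ Tr ⟶ Tr ⋙ Tl) (i : Tl ⋙ P ⟶ Tr ⋙ P)
    -- `(T_l, ml, ul)` is a monad
    (hml : ∀ X : M, Tl.map (ml.app X) ≫ ml.app X = ml.app (Tl.obj X) ≫ ml.app X)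
    (hul₁ : ∀ X : M, ul.app (Tl.obj X) ≫ ml.app X = 𝟙 (Tl.obj X))
    (hul₂ : ∀ X : M, Tl.map (ul.app X) ≫ ml.app X = 𝟙 (Tl.obj X))
    -- `(T_r, mr, ur)` is a monad
    (hmr : ∀ X : M, Tr.map (mr.app X) ≫ mr.app X = mr.app (Tr.obj X) ≫ mr.app X)
    (hur₁ : ∀ X : M, ur.app (Tr.obj X) ≫ mr.app X = 𝟙 (Tr.obj X))
    (hur₂ : ∀ X : M, Tr.map (ur.app X) ≫ mr.app X = 𝟙 (Tr.obj X))
    -- `t` is a distributive law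
    (ht₁ : ∀ X : M, mr.app (Tl.obj X) ≫ t.app X =
      Tr.map (t.app X) ≫ t.app (Tr.obj X) ≫ Tl.map (mr.app X))
    (ht₂ : ∀ X : M, Tr.map (ml.app X) ≫ t.app X =
      t.app (Tl.obj X) ≫ Tl.map (t.app X) ≫ ml.app (Tr.obj X))
    (ht₃ : ∀ X : M, ur.app (Tl.obj X) ≫ t.app X = Tl.map (ur.app X))
    (ht₄ : ∀ X : M, Tr.map (ul.app X) ≫ t.app X = ul.app (Tr.obj X))
    -- admissibility conditions on `i`
    (hi₁ : ∀ X : M, P.map (ul.app X) ≫ i.app X = P.map (ur.app X))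
    (hi₂ : ∀ X : M, P.map (ml.app X) ≫ i.app X =
      i.app (Tl.obj X) ≫ P.map (t.app X) ≫ i.app (Tr.obj X) ≫ P.map (mr.app X))
    -- transposition morphisms `w`, `w'`
    (X X' : M) (w : Tr.obj X ⟶ Tl.obj X) (w' : Tr.obj X' ⟶ Tl.obj X')
    (hw₁ : ur.app X ≫ w = ul.app X)
    (hw₂ : mr.app X ≫ w = Tr.map w ≫ t.app X ≫ Tl.map w ≫ ml.app X)
    (hw₁' : ur.app X' ≫ w' = ul.app X')
    (hw₂' : mr.app X' ≫ w' = Tr.map w' ≫ t.app X' ≫ Tl.map w' ≫ ml.app X')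
    -- a morphism of transposition morphisms
    (f : X ⟶ X') (hf : w ≫ Tl.map f = Tr.map f ≫ w') :
    ∀ n : ℕ, paraOp Tl Tr t P i w n ≫ P.map (fpowMap Tl f (n + 1)) =
      P.map (fpowMap Tl f (n + 1)) ≫ paraOp Tl Tr t P i w' n :=
  paraOp_naturality_general Tl Tr P t i X X' w w' f hf

end Stmt1
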